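/- Let M₁, …, Mₙ and N₁, …, Nₙ be complex Hilbert spaces. Suppose V₁ = [[α, B],[C, D]] is an isometric colligation on ℂ ⊕ (M₁ ⊕ ⋯ ⊕ Mₙ) with block entries Bᵢ : Mᵢ → ℂ, Cᵢ : ℂ → Mᵢ, Dᵢⱼ : Mⱼ → Mᵢ, and V₂ = [[β, F],[G, H]] is an isometric colligation on ℂ ⊕ (N₁ ⊕ ⋯ ⊕ Nₙ) with block entries Fᵢ : Nᵢ → ℂ, Gᵢ : ℂ → Nᵢ, Hᵢⱼ : Nⱼ → Nᵢ. Define the colligation V on ℂ ⊕ (⊕ᵢ₌₁ⁿ (Mᵢ ⊕ Nᵢ)) with top-left entry αβ and block entries B̂ᵢ = [Bᵢ, αFᵢ] : Mᵢ ⊕ Nᵢ → ℂ, Ĉᵢ = [βCᵢ; Gᵢ] : ℂ → Mᵢ ⊕ Nᵢ, and D̂ᵢⱼ = [[Dᵢⱼ, CᵢFⱼ],[0, Hᵢⱼ]] : Mⱼ ⊕ Nⱼ → Mᵢ ⊕ Nᵢ. Then V is an isometry, V satisfies property F(n), and τ_V(z) = τ_{V₁}(z) · τ_{V₂}(z) for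 all z ∈ 𝔻ⁿ. -/

import Mathlib

set_option synthInstance.maxHeartbeats 1000000
set_option linter.unusedSectionVars false
set_option maxHeartbeats 1000000


open ContinuousLinearMap Metric

noncomputable section

/-- One-variable Schur class: analytic on the open unit disc, bounded by one. -/
def SchurClass (f : ℂ → ℂ) : Prop :=
  AnalyticOnNhd ℂ f (ball 0 1) ∧ ∀ z ∈ ball (0 : ℂ) 1, ‖f z‖ ≤ 1

/-- The open unit bidisc as a subset of `ℂ × ℂ`. -/
def biDisc : Set (ℂ × ℂ) := (ball 0 1) ×ˢ (ball 0 1)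

/-- Two-variable Schur class. -/
def SchurClass2 (f : ℂ × ℂ → ℂ) : Prop :=
  AnalyticOnNhd ℂ f biDisc ∧ ∀ z ∈ biDisc, ‖f z‖ ≤ 1

/-- The open unit polydisc in `ℂⁿ`. -/
def polyDisc (n : ℕ) : Set (Fin n → ℂ) := {z | ∀ i, ‖z i‖ < 1}

variable {H : Type*} [NormedAddCommGroup H] [InnerProductSpace ℂ H]

/-- `V = [[a, B], [C, D]]` on `ℂ ⊕ H` is an isometric colligation, i.e. `V*V = I`,
expressed as preservation of inner products in the Hilbertian direct sum `ℂ ⊕ H`. -/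
def IsIsometricColligation (a : ℂ) (B : H →L[ℂ] ℂ) (C : ℂ →L[ℂ] H) (D : H →L[ℂ] H) : Prop :=
  ∀ (z w : ℂ) (h k : H),
    (starRingEnd ℂ) (a * z + B h) * (a * w + B k) + (inner ℂ (C z + D h) (C w + D k) : ℂ) =
      (starRingEnd ℂ) z * w + (inner ℂ h k : ℂ)

/-- One-variable transfer function `τ_V(z) = a + z B (I - z D)⁻¹ C`. -/
def transfer1 (a : ℂ) (B : H →L[ℂ] ℂ) (C : ℂ →L[ℂ] H) (D : H →L[ℂ] H) (z : ℂ) : ℂ :=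
  a + z * B (Ring.inverse (1 - z • D) (C 1))

section Pair

variable {H₁ H₂ K₁ K₂ : Type*}
  [NormedAddCommGroup H₁] [InnerProductSpace ℂ H₁]
  [NormedAddCommGroup H₂] [InnerProductSpace ℂ H₂]
  [NormedAddCommGroup K₁] [InnerProductSpace ℂ K₁]
  [NormedAddCommGroup K₂] [InnerProductSpace ℂ K₂]

/-- Row operator `[B₁, B₂] : H₁ ⊕ H₂ → ℂ`. -/
def rowB (B₁ : H₁ →L[ℂ] ℂ) (B₂ : H₂ →L[ℂ] ℂ) : WithLp 2 (H₁ × H₂) →L[ℂ] ℂ :=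
  (B₁.comp (fst ℂ H₁ H₂) + B₂.comp (snd ℂ H₁ H₂)).comp
    (WithLp.prodContinuousLinearEquiv 2 ℂ H₁ H₂).toContinuousLinearMap

/-- Column operator `[C₁; C₂] : ℂ → H₁ ⊕ H₂`. -/
def colC (C₁ : ℂ →L[ℂ] H₁) (C₂ : ℂ →L[ℂ] H₂) : ℂ →L[ℂ] WithLp 2 (H₁ × H₂) :=
  ((WithLp.prodContinuousLinearEquiv 2 ℂ H₁ H₂).symm.toContinuousLinearMap).comp (C₁.prod C₂)

/-- Block operator `[[D₁₁, D₁₂], [D₂₁, D₂₂]] : K₁ ⊕ K₂ → H₁ ⊕ H₂`. -/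
def blockD (D₁₁ : K₁ →L[ℂ] H₁) (D₁₂ : K₂ →L[ℂ] H₁) (D₂₁ : K₁ →L[ℂ] H₂) (D₂₂ : K₂ →L[ℂ] H₂) :
    WithLp 2 (K₁ × K₂) →L[ℂ] WithLp 2 (H₁ × H₂) :=
  ((WithLp.prodContinuousLinearEquiv 2 ℂ H₁ H₂).symm.toContinuousLinearMap).comp
    ((((D₁₁.comp (fst ℂ K₁ K₂) + D₁₂.comp (snd ℂ K₁ K₂))).prod
        (D₂₁.comp (fst ℂ K₁ K₂) + D₂₂.comp (snd ℂ K₁ K₂))).comp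
      (WithLp.prodContinuousLinearEquiv 2 ℂ K₁ K₂).toContinuousLinearMap)

/-- The diagonal operator `E(z) = z₁ I_{H₁} ⊕ z₂ I_{H₂}` on `H₁ ⊕ H₂`. -/
def diag2 (z : ℂ × ℂ) : WithLp 2 (H₁ × H₂) →L[ℂ] WithLp 2 (H₁ × H₂) :=
  blockD (z.1 • ContinuousLinearMap.id ℂ H₁) 0 0 (z.2 • ContinuousLinearMap.id ℂ H₂)

/-- Two-variable transfer function `τ_V(z) = a + B (I - E(z) D)⁻¹ E(z) C` on `ℂ ⊕ (H₁ ⊕ H₂)`. -/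
def transfer2 (a : ℂ) (B : WithLp 2 (H₁ × H₂) →L[ℂ] ℂ) (C : ℂ →L[ℂ] WithLp 2 (H₁ × H₂))
    (D : WithLp 2 (H₁ × H₂) →L[ℂ] WithLp 2 (H₁ × H₂)) (z : ℂ × ℂ) : ℂ :=
  a + B (Ring.inverse (1 - (diag2 z).comp D) (diag2 z (C 1)))

end Pair

section Fam

variable {n m k : ℕ} {K : Fin n → Type*} {M : Fin m → Type*} {N : Fin k → Type*}
  [∀ i, NormedAddCommGroup (K i)] [∀ i, InnerProductSpace ℂ (K i)]
  [∀ i, NormedAddCommGroup (M i)] [∀ i, InnerProductSpace ℂ (M i)]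
  [∀ i, NormedAddCommGroup (N i)] [∀ i, InnerProductSpace ℂ (N i)]

/-- Row operator `[B₁, …, Bₙ] : ⊕ᵢ Kᵢ → ℂ`. -/
def rowN (B : ∀ i, K i →L[ℂ] ℂ) : PiLp 2 K →L[ℂ] ℂ :=
  ∑ i, (B i).comp ((ContinuousLinearMap.proj i).comp
    (PiLp.continuousLinearEquiv 2 ℂ K).toContinuousLinearMap)

/-- Column operator `[C₁; …; Cₙ] : ℂ → ⊕ᵢ Kᵢ`. -/
def colN (C : ∀ i, ℂ →L[ℂ] K i) : ℂ →L[ℂ] PiLp 2 K :=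
  ((PiLp.continuousLinearEquiv 2 ℂ K).symm.toContinuousLinearMap).comp
    (ContinuousLinearMap.pi C)

/-- Rectangular block-matrix operator `[Dᵢⱼ] : ⊕ⱼ Nⱼ → ⊕ᵢ Mᵢ` (also used for square ones). -/
def matR (D : ∀ (i : Fin m) (j : Fin k), N j →L[ℂ] M i) : PiLp 2 N →L[ℂ] PiLp 2 M :=
  ((PiLp.continuousLinearEquiv 2 ℂ M).symm.toContinuousLinearMap).comp
    ((ContinuousLinearMap.pi fun i => ∑ j, (D i j).comp (ContinuousLinearMap.proj j)).comp
      (PiLp.continuousLinearEquiv 2 ℂ N).toContinuousLinearMap)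

/-- The diagonal operator `E(z) = z₁ I_{K₁} ⊕ ⋯ ⊕ zₙ I_{Kₙ}` on `⊕ᵢ Kᵢ`. -/
def diagN (z : Fin n → ℂ) : PiLp 2 K →L[ℂ] PiLp 2 K :=
  ((PiLp.continuousLinearEquiv 2 ℂ K).symm.toContinuousLinearMap).comp
    ((ContinuousLinearMap.pi fun i => z i • ContinuousLinearMap.proj i).comp
      (PiLp.continuousLinearEquiv 2 ℂ K).toContinuousLinearMap)

/-- `n`-variable transfer function `τ_V(z) = a + B (I - E(z) D)⁻¹ E(z) C` on `ℂ ⊕ (⊕ᵢ Kᵢ)`. -/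
def transferN (a : ℂ) (B : PiLp 2 K →L[ℂ] ℂ) (C : ℂ →L[ℂ] PiLp 2 K)
    (D : PiLp 2 K →L[ℂ] PiLp 2 K) (z : Fin n → ℂ) : ℂ :=
  a + B (Ring.inverse (1 - (diagN z).comp D) (diagN z (C 1)))

/-- Transfer function of a colligation on `ℂ ⊕ ((⊕ᵢ₌₁ᵐ Mᵢ) ⊕ (⊕ⱼ₌₁ᵏ Nⱼ))` in the `m + k`
variables `(z₁, z₂) ∈ 𝔻^m × 𝔻^k`, where `E(z₁, z₂) = (⊕ᵢ z₁ᵢ I_{Mᵢ}) ⊕ (⊕ⱼ z₂ⱼ I_{Nⱼ})`. -/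
def transferSplit (a : ℂ) (B : WithLp 2 (PiLp 2 M × PiLp 2 N) →L[ℂ] ℂ)
    (C : ℂ →L[ℂ] WithLp 2 (PiLp 2 M × PiLp 2 N))
    (D : WithLp 2 (PiLp 2 M × PiLp 2 N) →L[ℂ] WithLp 2 (PiLp 2 M × PiLp 2 N))
    (z₁ : Fin m → ℂ) (z₂ : Fin k → ℂ) : ℂ :=
  a + B (Ring.inverse (1 - (blockD (diagN z₁) 0 0 (diagN z₂)).comp D)
    (blockD (diagN z₁) 0 0 (diagN z₂) (C 1)))

end Fam

set_option maxHeartbeats 1000000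
instance {n : ℕ} {K : Fin n → Type*} [∀ i, NormedAddCommGroup (K i)]
    [∀ i, CompleteSpace (K i)] : CompleteSpace (PiLp 2 K) :=
  inferInstance
section Helpers

variable {H₁ H₂ K₁ K₂ : Type*}
  [NormedAddCommGroup H₁] [InnerProductSpace ℂ H₁]
  [NormedAddCommGroup H₂] [InnerProductSpace ℂ H₂]
  [NormedAddCommGroup K₁] [InnerProductSpace ℂ K₁]
  [NormedAddCommGroup K₂] [InnerProductSpace ℂ K₂]

lemma rowB_apply (B₁ : H₁ →L[ℂ] ℂ) (B₂ : H₂ →L[ℂ] ℂ) (x : WithLp 2 (H₁ × H₂)) :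
    rowB B₁ B₂ x = B₁ x.fst + B₂ x.snd := rfl

lemma colC_apply (C₁ : ℂ →L[ℂ] H₁) (C₂ : ℂ →L[ℂ] H₂) (z : ℂ) :
    colC C₁ C₂ z = (WithLp.equiv 2 (H₁ × H₂)).symm (C₁ z, C₂ z) := rfl

lemma blockD_apply (D₁₁ : K₁ →L[ℂ] H₁) (D₁₂ : K₂ →L[ℂ] H₁) (D₂₁ : K₁ →L[ℂ] H₂)
    (D₂₂ : K₂ →L[ℂ] H₂) (x : WithLp 2 (K₁ × K₂)) :
    blockD D₁₁ D₁₂ D₂₁ D₂₂ x =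
      (WithLp.equiv 2 (H₁ × H₂)).symm (D₁₁ x.fst + D₁₂ x.snd, D₂₁ x.fst + D₂₂ x.snd) := rfl

end Helpers

section FamHelpers

variable {n m k : ℕ} {K : Fin n → Type*} {M : Fin m → Type*} {N : Fin k → Type*}
  [∀ i, NormedAddCommGroup (K i)] [∀ i, InnerProductSpace ℂ (K i)]
  [∀ i, NormedAddCommGroup (M i)] [∀ i, InnerProductSpace ℂ (M i)]
  [∀ i, NormedAddCommGroup (N i)] [∀ i, InnerProductSpace ℂ (N i)]

lemma rowN_apply (B : ∀ i, K i →L[ℂ] ℂ) (x : PiLp 2 K) :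
    rowN B x = ∑ i, B i (x i) := by
  simp [rowN, ContinuousLinearMap.sum_apply]

lemma colN_apply (C : ∀ i, ℂ →L[ℂ] K i) (z : ℂ) (i : Fin n) :
    colN C z i = C i z := rfl

lemma matR_apply (D : ∀ (i : Fin m) (j : Fin k), N j →L[ℂ] M i) (x : PiLp 2 N) (i : Fin m) :
    matR D x i = ∑ j, D i j (x j) := by
  simp [matR, ContinuousLinearMap.sum_apply]

lemma diagN_apply (z : Fin n → ℂ) (x : PiLp 2 K) (i : Fin n) :
    diagN (K := K) z x i = z i • x i := rfl

end FamHelpers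

example : True := trivial
section Contr

variable {H : Type*} [NormedAddCommGroup H] [InnerProductSpace ℂ H]

lemma colligation_contraction {a : ℂ} {B : H →L[ℂ] ℂ} {C : ℂ →L[ℂ] H} {D : H →L[ℂ] H}
    (hV : IsIsometricColligation a B C D) (x : H) : ‖D x‖ ≤ ‖x‖ := by
  have h := hV 0 0 x x
  simp only [mul_zero, zero_add, map_zero, map_zero, zero_add] at h
  rw [RCLike.conj_mul, inner_self_eq_norm_sq_to_K, inner_self_eq_norm_sq_to_K] at h
  have h' : ‖B x‖ ^ 2 + ‖D x‖ ^ 2 = ‖x‖ ^ 2 := by exact_mod_cast h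
  nlinarith [norm_nonneg (B x), norm_nonneg (D x), norm_nonneg x]

end Contr

section Units

variable {n : ℕ} {K : Fin n → Type*}
  [∀ i, NormedAddCommGroup (K i)] [∀ i, InnerProductSpace ℂ (K i)] [∀ i, CompleteSpace (K i)]

lemma diagN_norm_le {z : Fin n → ℂ} {r : ℝ} (hr : 0 ≤ r) (hz : ∀ i, ‖z i‖ ≤ r)
    (x : PiLp 2 K) : ‖diagN (K := K) z x‖ ≤ r * ‖x‖ := by
  have h1 : ‖diagN (K := K) z x‖ = Real.sqrt (∑ i, ‖z i • x i‖ ^ 2) := by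
    rw [PiLp.norm_eq_of_L2]; rfl
  rw [h1]
  have h2 : Real.sqrt (∑ i, ‖z i • x i‖ ^ 2) ≤ Real.sqrt (r ^ 2 * ∑ i, ‖x i‖ ^ 2) := by
    apply Real.sqrt_le_sqrt
    rw [Finset.mul_sum]
    apply Finset.sum_le_sum
    intro i _
    rw [norm_smul, mul_pow]
    gcongr
    exact hz i
  refine h2.trans ?_
  rw [Real.sqrt_mul (by positivity), Real.sqrt_sq hr, ← PiLp.norm_eq_of_L2]

lemma isUnit_one_sub_diag_comp {z : Fin n → ℂ} (hz : ∀ i, ‖z i‖ < 1)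
    {A : PiLp 2 K →L[ℂ] PiLp 2 K} (hA : ∀ x, ‖A x‖ ≤ ‖x‖) :
    IsUnit (1 - (diagN (K := K) z).comp A) := by
  set r : NNReal := Finset.univ.sup fun i => ‖z i‖₊ with hr
  have hrlt : (r : ℝ) < 1 := by
    have : r < 1 := by
      rw [hr, Finset.sup_lt_iff (by norm_num : (⊥ : NNReal) < 1)]
      intro i _
      exact_mod_cast hz i
    exact_mod_cast this
  have hle : ∀ i, ‖z i‖ ≤ (r : ℝ) := fun i => by
    exact_mod_cast Finset.le_sup (f := fun i => ‖z i‖₊) (Finset.mem_univ i)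
  have hnorm : ‖(diagN (K := K) z).comp A‖ < 1 := by
    refine lt_of_le_of_lt (ContinuousLinearMap.opNorm_le_bound _ r.coe_nonneg fun x => ?_) hrlt
    · calc ‖diagN (K := K) z (A x)‖ ≤ r * ‖A x‖ := diagN_norm_le r.coe_nonneg hle _
        _ ≤ r * ‖x‖ := by have := hA x; have := r.coe_nonneg; nlinarith
  exact isUnit_one_sub_of_norm_lt_one hnorm

end Units
lemma clm_scalar_apply {X : Type*} [NormedAddCommGroup X] [NormedSpace ℂ X]
    (T : ℂ →L[ℂ] X) (t : ℂ) : T t = t • T 1 := by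
  conv_lhs => rw [← mul_one t, ← smul_eq_mul, map_smul]
section MainHelpers

variable {n : ℕ} {M N : Fin n → Type*}
  [∀ i, NormedAddCommGroup (M i)] [∀ i, InnerProductSpace ℂ (M i)]
  [∀ i, NormedAddCommGroup (N i)] [∀ i, InnerProductSpace ℂ (N i)]

/-- First components of a vector in `⊕ᵢ (Mᵢ ⊕ Nᵢ)`. -/
def fstVec (h : PiLp 2 fun i => WithLp 2 (M i × N i)) : PiLp 2 M := WithLp.toLp 2 fun i => (h i).fst

/-- Second components of a vector in `⊕ᵢ (Mᵢ ⊕ Nᵢ)`. -/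
def sndVec (h : PiLp 2 fun i => WithLp 2 (M i × N i)) : PiLp 2 N := WithLp.toLp 2 fun i => (h i).snd

lemma sum_fst' {ι : Type*} {A B : Type*} [NormedAddCommGroup A] [NormedAddCommGroup B]
    (s : Finset ι) (f : ι → WithLp 2 (A × B)) :
    (∑ x ∈ s, f x).fst = ∑ x ∈ s, (f x).fst := by
  classical
  induction s using Finset.cons_induction with
  | empty => rfl
  | cons a s ha ih => rw [Finset.sum_cons, Finset.sum_cons, WithLp.add_fst, ih]

lemma sum_snd' {ι : Type*} {A B : Type*} [NormedAddCommGroup A] [NormedAddCommGroup B]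
    (s : Finset ι) (f : ι → WithLp 2 (A × B)) :
    (∑ x ∈ s, f x).snd = ∑ x ∈ s, (f x).snd := by
  classical
  induction s using Finset.cons_induction with
  | empty => rfl
  | cons a s ha ih => rw [Finset.sum_cons, Finset.sum_cons, WithLp.add_snd, ih]

lemma equiv_symm_fst' {A B : Type*} (a : A) (b : B) :
    ((WithLp.equiv 2 (A × B)).symm (a, b)).fst = a := rfl

lemma equiv_symm_snd' {A B : Type*} (a : A) (b : B) :
    ((WithLp.equiv 2 (A × B)).symm (a, b)).snd = b := rfl

lemma fstVec_apply (h : PiLp 2 fun i => WithLp 2 (M i × N i)) (i : Fin n) :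
    fstVec h i = (h i).fst := rfl

lemma sndVec_apply (h : PiLp 2 fun i => WithLp 2 (M i × N i)) (i : Fin n) :
    sndVec h i = (h i).snd := rfl

variable (α β : ℂ) (B : ∀ i, M i →L[ℂ] ℂ) (C : ∀ i, ℂ →L[ℂ] M i) (D : ∀ i j, M j →L[ℂ] M i)
  (F : ∀ i, N i →L[ℂ] ℂ) (G : ∀ i, ℂ →L[ℂ] N i) (Hop : ∀ i j, N j →L[ℂ] N i)

lemma hatRow (h : PiLp 2 fun i => WithLp 2 (M i × N i)) :
    rowN (fun i => rowB (B i) (α • F i)) h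
      = rowN B (fstVec h) + α * rowN F (sndVec h) := by
  simp only [rowN_apply, rowB_apply, ContinuousLinearMap.smul_apply, smul_eq_mul,
    Finset.sum_add_distrib, Finset.mul_sum]
  rfl

lemma hatVec_fst (z : ℂ) (h : PiLp 2 fun i => WithLp 2 (M i × N i)) (i : Fin n) :
    ((colN (fun i => colC (β • C i) (G i)) z
        + matR (fun i j => blockD (D i j) ((C i) ∘L (F j)) 0 (Hop i j)) h) i).fst
      = (colN C (β * z + rowN F (sndVec h)) + matR D (fstVec h)) i := by
  have : ((colN (fun i => colC (β • C i) (G i)) z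
        + matR (fun i j => blockD (D i j) ((C i) ∘L (F j)) 0 (Hop i j)) h) i)
      = colC (β • C i) (G i) z + ∑ j, blockD (D i j) ((C i) ∘L (F j)) 0 (Hop i j) (h j) := by
    rw [PiLp.add_apply, colN_apply, matR_apply]
  rw [this]
  have h2 : (colN C (β * z + rowN F (sndVec h)) + matR D (fstVec h)) i
      = C i (β * z + rowN F (sndVec h)) + ∑ j, D i j (fstVec h j) := by
    rw [PiLp.add_apply, colN_apply, matR_apply]
  rw [h2]
  simp only [WithLp.add_fst, sum_fst', blockD_apply, colC_apply, equiv_symm_fst',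
    map_add, rowN_apply, map_sum]
  simp only [ContinuousLinearMap.smul_apply, ContinuousLinearMap.comp_apply,
    ContinuousLinearMap.zero_apply, Finset.sum_add_distrib]
  have h3 : C i (β * z) = β • C i z := by
    rw [show β * z = β • z from rfl, map_smul]
  rw [h3]
  simp only [fstVec_apply, sndVec_apply]
  abel

lemma hatVec_snd (z : ℂ) (h : PiLp 2 fun i => WithLp 2 (M i × N i)) (i : Fin n) :
    ((colN (fun i => colC (β • C i) (G i)) z
        + matR (fun i j => blockD (D i j) ((C i) ∘L (F j)) 0 (Hop i j)) h) i).snd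
      = (colN G z + matR Hop (sndVec h)) i := by
  have : ((colN (fun i => colC (β • C i) (G i)) z
        + matR (fun i j => blockD (D i j) ((C i) ∘L (F j)) 0 (Hop i j)) h) i)
      = colC (β • C i) (G i) z + ∑ j, blockD (D i j) ((C i) ∘L (F j)) 0 (Hop i j) (h j) := by
    rw [PiLp.add_apply, colN_apply, matR_apply]
  rw [this]
  have h2 : (colN G z + matR Hop (sndVec h)) i = G i z + ∑ j, Hop i j (sndVec h j) := by
    rw [PiLp.add_apply, colN_apply, matR_apply]
  rw [h2]
  simp only [WithLp.add_snd, sum_snd', blockD_apply, colC_apply, equiv_symm_snd',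
    ContinuousLinearMap.zero_apply, zero_add]
  rfl

lemma prod_inner_apply' {A B : Type*} [NormedAddCommGroup A] [InnerProductSpace ℂ A]
    [NormedAddCommGroup B] [InnerProductSpace ℂ B] (x y : WithLp 2 (A × B)) :
    (inner ℂ x y : ℂ) = inner ℂ x.fst y.fst + inner ℂ x.snd y.snd := rfl

lemma hatInner (z w : ℂ) (h k : PiLp 2 fun i => WithLp 2 (M i × N i)) :
    (inner ℂ (colN (fun i => colC (β • C i) (G i)) z
        + matR (fun i j => blockD (D i j) ((C i) ∘L (F j)) 0 (Hop i j)) h)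
      (colN (fun i => colC (β • C i) (G i)) w
        + matR (fun i j => blockD (D i j) ((C i) ∘L (F j)) 0 (Hop i j)) k) : ℂ)
      = (inner ℂ (colN C (β * z + rowN F (sndVec h)) + matR D (fstVec h))
            (colN C (β * w + rowN F (sndVec k)) + matR D (fstVec k)) : ℂ)
        + (inner ℂ (colN G z + matR Hop (sndVec h)) (colN G w + matR Hop (sndVec k)) : ℂ) := by
  simp only [PiLp.inner_apply, prod_inner_apply', hatVec_fst, hatVec_snd,
    Finset.sum_add_distrib]

lemma innerPN (h k : PiLp 2 fun i => WithLp 2 (M i × N i)) :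
    (inner ℂ h k : ℂ) = (inner ℂ (fstVec h) (fstVec k) : ℂ) + (inner ℂ (sndVec h) (sndVec k) : ℂ) := by
  simp only [PiLp.inner_apply, WithLp.prod_inner_apply, Finset.sum_add_distrib]
  rfl

end MainHelpers
/-- Theorem 3.2 of the paper. Given isometric colligations
`V₁ = [[α,B],[C,D]]` on `ℂ ⊕ (M₁ ⊕ ⋯ ⊕ Mₙ)` and `V₂ = [[β,F],[G,H]]` on
`ℂ ⊕ (N₁ ⊕ ⋯ ⊕ Nₙ)`, the colligation `V` on `ℂ ⊕ (⊕ᵢ (Mᵢ ⊕ Nᵢ))` with top-left entry `αβ`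
and block entries `B̂ᵢ = [Bᵢ, αFᵢ]`, `Ĉᵢ = [βCᵢ; Gᵢ]`, `D̂ᵢⱼ = [[Dᵢⱼ, CᵢFⱼ],[0, Hᵢⱼ]]` is an
isometry, it satisfies property `F(n)` (its `(2,1)`-blocks vanish and
`(αβ) D̂ᵢⱼ(12) = Ĉᵢ(1) B̂ⱼ(2)`), and `τ_V = τ_{V₁} τ_{V₂}` on the polydisc. -/
theorem isometric_colligation_product_Fn
    {n : ℕ} {M N : Fin n → Type*}
    [∀ i, NormedAddCommGroup (M i)] [∀ i, InnerProductSpace ℂ (M i)] [∀ i, CompleteSpace (M i)]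
    [∀ i, NormedAddCommGroup (N i)] [∀ i, InnerProductSpace ℂ (N i)] [∀ i, CompleteSpace (N i)]
    (α β : ℂ)
    (B : ∀ i, M i →L[ℂ] ℂ) (C : ∀ i, ℂ →L[ℂ] M i) (D : ∀ i j, M j →L[ℂ] M i)
    (F : ∀ i, N i →L[ℂ] ℂ) (G : ∀ i, ℂ →L[ℂ] N i) (Hop : ∀ i j, N j →L[ℂ] N i)
    (hV₁ : IsIsometricColligation α (rowN B) (colN C) (matR D))
    (hV₂ : IsIsometricColligation β (rowN F) (colN G) (matR Hop)) :
    IsIsometricColligation (α * β)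
        (rowN fun i => rowB (B i) (α • F i))
        (colN fun i => colC (β • C i) (G i))
        (matR fun i j => blockD (D i j) ((C i) ∘L (F j)) 0 (Hop i j)) ∧
      (∀ i j, (α * β) • ((C i) ∘L (F j)) = (β • C i) ∘L (α • F j)) ∧
      ∀ z ∈ polyDisc n,
        transferN (α * β)
            (rowN fun i => rowB (B i) (α • F i))
            (colN fun i => colC (β • C i) (G i))
            (matR fun i j => blockD (D i j) ((C i) ∘L (F j)) 0 (Hop i j)) z =
          transferN α (rowN B) (colN C) (matR D) z *
            transferN β (rowN F) (colN G) (matR Hop) z := by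
  have hIso : IsIsometricColligation (α * β)
      (rowN fun i => rowB (B i) (α • F i))
      (colN fun i => colC (β • C i) (G i))
      (matR fun i j => blockD (D i j) ((C i) ∘L (F j)) 0 (Hop i j)) := by
    intro z w h k
    rw [hatRow, hatRow, hatInner, innerPN]
    have e1 := hV₁ (β * z + rowN F (sndVec h)) (β * w + rowN F (sndVec k)) (fstVec h) (fstVec k)
    have e2 := hV₂ z w (sndVec h) (sndVec k)
    simp only [map_add, map_mul] at e1 e2 ⊢
    linear_combination e1 + e2
  refine ⟨hIso, fun i j => by ext x; simp [smul_smul, mul_comm], ?_⟩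
  -- Part 3: transfer functions multiply
  intro z hz
  have hzi : ∀ i, ‖z i‖ < 1 := hz
  have hDc := colligation_contraction hV₁
  have hHc := colligation_contraction hV₂
  have hDhc := colligation_contraction hIso
  have hu1 : IsUnit (1 - (diagN z).comp (matR D)) := isUnit_one_sub_diag_comp hzi hDc
  have hu2 : IsUnit (1 - (diagN z).comp (matR Hop)) := isUnit_one_sub_diag_comp hzi hHc
  have hu3 : IsUnit (1 - (diagN z).comp
      (matR fun i j => blockD (D i j) ((C i) ∘L (F j)) 0 (Hop i j))) :=
    isUnit_one_sub_diag_comp hzi hDhc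
  set w₁ := Ring.inverse (1 - (diagN z).comp (matR D)) (diagN z ((colN C) 1)) with hw₁def
  set w₂ := Ring.inverse (1 - (diagN z).comp (matR Hop)) (diagN z ((colN G) 1)) with hw₂def
  have hw₁ : w₁ = diagN z ((colN C) 1) + diagN z (matR D w₁) := by
    have h0 : (1 - (diagN z).comp (matR D)) w₁ = diagN z ((colN C) 1) := by
      rw [hw₁def, ← ContinuousLinearMap.mul_apply, Ring.mul_inverse_cancel _ hu1,
        ContinuousLinearMap.one_apply]
    rw [ContinuousLinearMap.sub_apply, ContinuousLinearMap.one_apply,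
      ContinuousLinearMap.comp_apply, sub_eq_iff_eq_add] at h0
    exact h0
  have hw₂ : w₂ = diagN z ((colN G) 1) + diagN z (matR Hop w₂) := by
    have h0 : (1 - (diagN z).comp (matR Hop)) w₂ = diagN z ((colN G) 1) := by
      rw [hw₂def, ← ContinuousLinearMap.mul_apply, Ring.mul_inverse_cancel _ hu2,
        ContinuousLinearMap.one_apply]
    rw [ContinuousLinearMap.sub_apply, ContinuousLinearMap.one_apply,
      ContinuousLinearMap.comp_apply, sub_eq_iff_eq_add] at h0
    exact h0
  have hw₁i : ∀ i, w₁ i = z i • (C i 1) + z i • ∑ j, D i j (w₁ j) := by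
    intro i
    conv_lhs => rw [hw₁]
    rw [PiLp.add_apply, diagN_apply, diagN_apply, matR_apply, colN_apply]
  have hw₂i : ∀ i, w₂ i = z i • (G i 1) + z i • ∑ j, Hop i j (w₂ j) := by
    intro i
    conv_lhs => rw [hw₂]
    rw [PiLp.add_apply, diagN_apply, diagN_apply, matR_apply, colN_apply]
  set t : ℂ := rowN F w₂ with htdef
  set s : ℂ := rowN B w₁ with hsdef
  set u : PiLp 2 (fun i => WithLp 2 (M i × N i)) :=
    WithLp.toLp 2 fun i => (WithLp.equiv 2 (M i × N i)).symm ((β + t) • w₁ i, w₂ i) with hudef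
  have heq : (1 - (diagN z).comp
      (matR fun i j => blockD (D i j) ((C i) ∘L (F j)) 0 (Hop i j))) u
      = diagN z ((colN fun i => colC (β • C i) (G i)) 1) := by
    refine (WithLp.ext_iff 2).2 (funext fun i => ?_)
    rw [ContinuousLinearMap.sub_apply, ContinuousLinearMap.one_apply,
      ContinuousLinearMap.comp_apply]
    have hL : ((u - diagN z ((matR fun i j => blockD (D i j) ((C i) ∘L (F j)) 0 (Hop i j)) u)) i)
        = u i - z i • ∑ j, blockD (D i j) ((C i) ∘L (F j)) 0 (Hop i j) (u j) := by
      rw [PiLp.sub_apply, diagN_apply, matR_apply]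
    rw [hL]
    have hR : (diagN z ((colN fun i => colC (β • C i) (G i)) 1)) i
        = z i • colC (β • C i) (G i) 1 := by
      rw [diagN_apply, colN_apply]
    rw [hR]
    refine (WithLp.ext_iff 2).2 (Prod.ext ?_ ?_)
    · show (u i - z i • ∑ j, blockD (D i j) ((C i) ∘L (F j)) 0 (Hop i j) (u j)).fst
        = (z i • colC (β • C i) (G i) 1).fst
      rw [WithLp.sub_fst, WithLp.smul_fst, WithLp.smul_fst, sum_fst']
      simp only [blockD_apply, colC_apply, equiv_symm_fst', equiv_symm_snd',
        ContinuousLinearMap.comp_apply, hudef, ContinuousLinearMap.smul_apply]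
      simp only [Finset.sum_add_distrib, map_smul]
      have hsum : ∑ j, C i (F j (w₂ j)) = t • C i 1 := by
        rw [← map_sum, htdef, rowN_apply, clm_scalar_apply]
      rw [hsum]
      rw [← Finset.smul_sum]
      have hwi := hw₁i i
      rw [hwi]
      module
    · show (u i - z i • ∑ j, blockD (D i j) ((C i) ∘L (F j)) 0 (Hop i j) (u j)).snd
        = (z i • colC (β • C i) (G i) 1).snd
      rw [WithLp.sub_snd, WithLp.smul_snd, WithLp.smul_snd, sum_snd']
      simp only [blockD_apply, colC_apply, equiv_symm_snd', ContinuousLinearMap.zero_apply,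
        zero_add, hudef]
      have hwi := hw₂i i
      rw [hwi]
      module
  have hinv : Ring.inverse (1 - (diagN z).comp
      (matR fun i j => blockD (D i j) ((C i) ∘L (F j)) 0 (Hop i j)))
      (diagN z ((colN fun i => colC (β • C i) (G i)) 1)) = u := by
    rw [← heq, ← ContinuousLinearMap.mul_apply, Ring.inverse_mul_cancel _ hu3,
      ContinuousLinearMap.one_apply]
  show (α * β) + _ = _
  simp only [transferN]
  rw [hinv, hatRow]
  have hfst : fstVec u = (β + t) • w₁ := rfl
  have hsnd : sndVec u = w₂ := rfl
  rw [hfst, hsnd, map_smul, ← hw₁def, ← hw₂def, ← htdef, ← hsdef, smul_eq_mul]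
  ring
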